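/- Neutrality of internal steps for partial normal forms (Call-by-Name): for all λ-terms M and M', if M ⋫ M' (i.e. M →β M' but not M ⊳ M'), then ω(M) = ω(M'). -/
import Mathlib


/-- Untyped λ-terms in de Bruijn representation. -/
inductive Tm : Type
  | var : ℕ → Tm
  | lam : Tm → Tm
  | app : Tm → Tm → Tm
deriving DecidableEq

namespace Tm

/-- Lift (shift by one) the free variables of index `≥ d`. -/
def lift (d : ℕ) : Tm → Tm
  | var n => if n < d then var n else var (n + 1)
  | lam M => lam (lift (d + 1) M)
  | app M N => app (lift d M) (lift d N)

/-- Capture-avoiding substitution `M[N/k]` of `N` for the free variable `k` in `M`. -/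
def subst : Tm → ℕ → Tm → Tm
  | var n, k, N => if n = k then N else if k < n then var (n - 1) else var n
  | lam M, k, N => lam (subst M (k + 1) (lift 0 N))
  | app M₁ M₂, k, N => app (subst M₁ k N) (subst M₂ k N)

end Tm

/-- β-reduction: the closure of the root rule `(λx.M)N ↦β M[N/x]` under arbitrary contexts. -/
inductive Beta : Tm → Tm → Prop
  | beta (M N : Tm) : Beta (Tm.app (Tm.lam M) N) (M.subst 0 N)
  | lam {M M'} : Beta M M' → Beta (Tm.lam M) (Tm.lam M')
  | appL {M M' N} : Beta M M' → Beta (Tm.app M N) (Tm.app M' N)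
  | appR {M N N'} : Beta N N' → Beta (Tm.app M N) (Tm.app M N')

/-- Head reduction: the closure of `↦β` under head contexts `H ::= ⟨⟩ | λx.H | H M`. -/
inductive Head : Tm → Tm → Prop
  | beta (M N : Tm) : Head (Tm.app (Tm.lam M) N) (M.subst 0 N)
  | lam {M M'} : Head M M' → Head (Tm.lam M) (Tm.lam M')
  | appL {M M' N} : Head M M' → Head (Tm.app M N) (Tm.app M' N)

/-- The unbiased strategy `⊳`: perform head steps as long as possible; once the term has
no head redex, iterate in the subterms (in arbitrary order). -/
inductive Unb : Tm → Tm → Prop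
  | head {M M'} : Head M M' → Unb M M'
  | lam {P P'} : (∀ s, ¬ Head (Tm.lam P) s) → Unb P P' → Unb (Tm.lam P) (Tm.lam P')
  | appL {P P' Q} : (∀ s, ¬ Head (Tm.app P Q) s) → Unb P P' →
      Unb (Tm.app P Q) (Tm.app P' Q)
  | appR {P Q Q'} : (∀ s, ¬ Head (Tm.app P Q) s) → Unb Q Q' →
      Unb (Tm.app P Q) (Tm.app P Q')

/-- Partial terms: `P ::= Ω | x | λx.P | P P`. -/
inductive PT : Type
  | bot : PT
  | var : ℕ → PT
  | lam : PT → PT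
  | app : PT → PT → PT
deriving DecidableEq

/-- `M` is of the form `x M₁ … M_p` (a neutral term). -/
def isNeutral : Tm → Bool
  | Tm.var _ => true
  | Tm.app M _ => isNeutral M
  | Tm.lam _ => false

/-- `M` is a head normal form `λx₁…xₙ. x M₁ … M_p`. -/
def isHnf : Tm → Bool
  | Tm.var _ => true
  | Tm.lam M => isHnf M
  | Tm.app M _ => isNeutral M

/-- The partial normal form `ω(M)`: `Ω` if `M` is not a hnf, and
`ω(λx₁…xₙ. x M₁ … M_p) = λx₁…xₙ. x ω(M₁) … ω(M_p)` otherwise. -/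
def pnf : Tm → PT
  | Tm.var n => PT.var n
  | Tm.lam M => if isHnf M then PT.lam (pnf M) else PT.bot
  | Tm.app M N => if isNeutral M then PT.app (pnf M) (pnf N) else PT.bot

/-- A term with a head redex is neither neutral nor a hnf. -/
lemma head_not_hnf {M M' : Tm} (h : Head M M') :
    isNeutral M = false ∧ isHnf M = false := by
  induction h with
  | beta M N => exact ⟨rfl, rfl⟩
  | lam h ih => exact ⟨rfl, ih.2⟩
  | appL h ih => exact ⟨ih.1, ih.1⟩

/-- A non-head β-step preserves neutrality and hnf-ness. -/
lemma beta_nothead_spine {M M' : Tm} (h : Beta M M') (hn : ¬ Head M M') :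
    isNeutral M' = isNeutral M ∧ isHnf M' = isHnf M := by
  induction h with
  | beta M N => exact absurd (Head.beta M N) hn
  | lam h ih =>
    have h2 := ih (fun hh => hn (Head.lam hh))
    exact ⟨rfl, h2.2⟩
  | appL h ih =>
    have h2 := ih (fun hh => hn (Head.appL hh))
    exact ⟨h2.1, h2.1⟩
  | appR h ih => exact ⟨rfl, rfl⟩

/-- **Neutrality of internal steps for partial normal forms (Call-by-Name)**:
if `M ⋫ M'` (i.e. `M →β M'` but not `M ⊳ M'`), then `ω(M) = ω(M')`. -/
theorem cbn_internal_pnf_neutral (M M' : Tm) (hstep : Beta M M') (hnotunb : ¬ Unb M M') :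
    pnf M = pnf M' := by
  revert hnotunb
  induction hstep with
  | beta M N => exact fun hn => absurd (Unb.head (Head.beta M N)) hn
  | lam h ih =>
    rename_i P P'
    intro hn
    have hnP : ¬ Head P P' := fun hh => hn (Unb.head (Head.lam hh))
    have hsp := beta_nothead_spine h hnP
    by_cases hH : isHnf P = true
    · have hnohead : ∀ s, ¬ Head (Tm.lam P) s := fun s hs => by
        have h2 := (head_not_hnf hs).2
        simp only [isHnf] at h2
        rw [hH] at h2; simp at h2
      have hnu : ¬ Unb P P' := fun hu => hn (Unb.lam hnohead hu)
      have hpe := ih hnu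
      simp [pnf, hH, hsp.2, hpe]
    · have hH' : isHnf P = false := Bool.not_eq_true _ |>.mp hH
      simp [pnf, hH', hsp.2]
  | appL h ih =>
    rename_i P P' Q
    intro hn
    have hnP : ¬ Head P P' := fun hh => hn (Unb.head (Head.appL hh))
    have hsp := beta_nothead_spine h hnP
    by_cases hNe : isNeutral P = true
    · have hnohead : ∀ s, ¬ Head (Tm.app P Q) s := fun s hs => by
        have h2 := (head_not_hnf hs).2
        simp only [isHnf] at h2
        rw [hNe] at h2; simp at h2
      have hnu : ¬ Unb P P' := fun hu => hn (Unb.appL hnohead hu)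
      have hpe := ih hnu
      simp [pnf, hNe, hsp.1, hpe]
    · have hNe' : isNeutral P = false := Bool.not_eq_true _ |>.mp hNe
      simp [pnf, hNe', hsp.1]
  | appR h ih =>
    rename_i P Q Q'
    intro hn
    by_cases hNe : isNeutral P = true
    · have hnohead : ∀ s, ¬ Head (Tm.app P Q) s := fun s hs => by
        have h2 := (head_not_hnf hs).2
        simp only [isHnf] at h2
        rw [hNe] at h2; simp at h2
      have hnu : ¬ Unb Q Q' := fun hu => hn (Unb.appR hnohead hu)
      have hpe := ih hnu
      simp [pnf, hNe, hpe]
    · have hNe' : isNeutral P = false := Bool.not_eq_true _ |>.mp hNe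
      simp [pnf, hNe']
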